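/- Let P be a linear operator on L²(μ) given by an integral kernel k(x,y) with respect to the measure μ, i.e., (Pf)(x) = ∫ k(x,y) f(y) dμ(y). If ∫∫ k(x,y) k(y,x) dμ(x) dμ(y) < ∞ and P is self-adjoint on L²(μ), then ∫∫ k(x,y)² dμ(x) dμ(y) < ∞, so P is a Hilbert–Schmidt operator. -/

import Mathlib

/-!
Testing self-adjointness against indicators `1_A`, `1_B` of sets of finite measure shows that
`k(x, y)` and its transpose `k(y, x)` have the same integral over every finite-measure rectangle.
Rectangles form a π-system generating the product σ-algebra, so by σ-finiteness `k` is symmetric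
a.e., and then `k(x, y)²` agrees a.e. with the integrable function `k(x, y) k(y, x)`.
-/

open MeasureTheory
open scoped ENNReal

section

variable {X Y E : Type*} [MeasurableSpace X] [MeasurableSpace Y]
  [NormedAddCommGroup E] [NormedSpace ℝ E] [CompleteSpace E]

theorem MeasureTheory.Integrable.ae_eq_zero_of_forall_setIntegral_prod_eq_zero
    {ρ : Measure (X × Y)} {f : X × Y → E} (hf : Integrable f ρ)
    (h : ∀ ⦃s : Set X⦄, MeasurableSet s → ∀ ⦃t : Set Y⦄, MeasurableSet t →
      ∫ p in s ×ˢ t, f p ∂ρ = 0) :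
    f =ᵐ[ρ] 0 := by
  suffices ∀ u, MeasurableSet u → ∫ p in u, f p ∂ρ = 0 from
    hf.ae_eq_zero_of_forall_setIntegral_eq_zero fun u hu _ => this u hu
  intro u hu
  induction u, hu using
    MeasurableSpace.induction_on_inter generateFrom_prod.symm isPiSystem_prod with
  | empty => simp
  | basic u hu =>
    obtain ⟨s, hs, t, ht, rfl⟩ := hu
    exact h hs ht
  | compl u hu ihu =>
    have huniv : ∫ p, f p ∂ρ = 0 := by
      simpa [Set.univ_prod_univ] using h MeasurableSet.univ MeasurableSet.univ
    simpa [ihu, huniv] using integral_add_compl hu hf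
  | iUnion g g_disj g_meas hg => simp [integral_iUnion g_meas g_disj hf.integrableOn, hg]

theorem ae_eq_of_forall_setIntegral_prod_eq_of_sigmaFinite
    {μ : Measure X} {ν : Measure Y} [SigmaFinite μ] [SigmaFinite ν] {f g : X × Y → E}
    (hf : ∀ ⦃s : Set X⦄, MeasurableSet s → μ s < ∞ →
      ∀ ⦃t : Set Y⦄, MeasurableSet t → ν t < ∞ →
        IntegrableOn f (s ×ˢ t) (μ.prod ν))
    (hg : ∀ ⦃s : Set X⦄, MeasurableSet s → μ s < ∞ →
      ∀ ⦃t : Set Y⦄, MeasurableSet t → ν t < ∞ →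
        IntegrableOn g (s ×ˢ t) (μ.prod ν))
    (hfg : ∀ ⦃s : Set X⦄, MeasurableSet s → μ s < ∞ →
      ∀ ⦃t : Set Y⦄, MeasurableSet t → ν t < ∞ →
        ∫ p in s ×ˢ t, f p ∂(μ.prod ν) = ∫ p in s ×ˢ t, g p ∂(μ.prod ν)) :
    f =ᵐ[μ.prod ν] g := by
  rw [← sub_ae_eq_zero]
  have hcover : ⋃ n, spanningSets μ n ×ˢ spanningSets ν n = Set.univ := by
    rw [Set.iUnion_prod_of_monotone (monotone_spanningSets μ) (monotone_spanningSets ν),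
      iUnion_spanningSets, iUnion_spanningSets, Set.univ_prod_univ]
  rw [← Measure.restrict_univ (μ := μ.prod ν), ← hcover, Filter.EventuallyEq,
    ae_restrict_iUnion_iff]
  intro n
  have hSμ := measure_spanningSets_lt_top μ n
  have hSν := measure_spanningSets_lt_top ν n
  have hSμ_meas := measurableSet_spanningSets μ n
  have hSν_meas := measurableSet_spanningSets ν n
  refine Integrable.ae_eq_zero_of_forall_setIntegral_prod_eq_zero
    ((hf hSμ_meas hSμ hSν_meas hSν).sub (hg hSμ_meas hSμ hSν_meas hSν)) fun s hs t ht => ?_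
  have hsμ := measure_inter_lt_top_of_right_ne_top (s := s) hSμ.ne
  have htν := measure_inter_lt_top_of_right_ne_top (s := t) hSν.ne
  rw [Measure.restrict_restrict (hs.prod ht), Set.prod_inter_prod, Pi.sub_def, integral_sub,
    sub_eq_zero]
  · exact hfg (hs.inter hSμ_meas) hsμ (ht.inter hSν_meas) htν
  · exact hf (hs.inter hSμ_meas) hsμ (ht.inter hSν_meas) htν
  · exact hg (hs.inter hSμ_meas) hsμ (ht.inter hSν_meas) htν

theorem integrableOn_prod_of_integrable_mul_indicator {ρ : Measure (X × Y)} {f : X × Y → ℝ}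
    {A : Set Y} (hA : MeasurableSet A) (hf : Integrable (fun p => f p * A.indicator 1 p.2) ρ)
    (B : Set X) : IntegrableOn f (B ×ˢ A) ρ := by
  have : (fun p => f p * A.indicator 1 p.2) = (Set.univ ×ˢ A).indicator f := by
    ext p
    by_cases hp : p.2 ∈ A <;> simp [hp]
  rw [this, integrable_indicator_iff (MeasurableSet.univ.prod hA)] at hf
  exact hf.mono_set (Set.prod_mono (Set.subset_univ B) le_rfl)

theorem integral_integral_mul_indicator {μ : Measure X} {ν : Measure Y} [SFinite μ] [SFinite ν]
    {k : X → Y → ℝ} {A : Set Y} {B : Set X} (hA : MeasurableSet A) (hB : MeasurableSet B)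
    (hk : IntegrableOn (fun p => k p.1 p.2) (B ×ˢ A) (μ.prod ν)) :
    ∫ x, (∫ y, k x y * A.indicator 1 y ∂ν) * B.indicator 1 x ∂μ =
      ∫ p in B ×ˢ A, k p.1 p.2 ∂(μ.prod ν) := by
  rw [setIntegral_prod _ hk, ← integral_indicator hB]
  congr 1 with x
  by_cases hx : x ∈ B
  · simp only [Set.indicator_of_mem hx, Pi.one_apply, mul_one, ← integral_indicator hA]
    congr 1 with y
    by_cases hy : y ∈ A <;> simp [hy]
  · simp [hx]

end

theorem stmt2_general {X : Type*} [MeasurableSpace X] (μ : Measure X) [SigmaFinite μ]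
    (k : X → X → ℝ)
    (hmix : Integrable (fun p : X × X => k p.1 p.2 * k p.2 p.1) (μ.prod μ))
    (hdef : ∀ f : X → ℝ, MemLp f 2 μ → Integrable (fun p : X × X => k p.1 p.2 * f p.2) (μ.prod μ))
    (hsa : ∀ f g : X → ℝ, MemLp f 2 μ → MemLp g 2 μ →
      ∫ x, (∫ y, k x y * f y ∂μ) * g x ∂μ = ∫ x, f x * ∫ y, k x y * g y ∂μ ∂μ) :
    Integrable (fun p : X × X => (k p.1 p.2) ^ 2) (μ.prod μ) := by
  have hmemLp {A : Set X} (hA : MeasurableSet A) (hAμ : μ A < ∞) :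
      MemLp (A.indicator (1 : X → ℝ)) 2 μ :=
    memLp_indicator_const 2 hA 1 (Or.inr hAμ.ne)
  have hint {A B : Set X} (hA : MeasurableSet A) (hAμ : μ A < ∞) :
      IntegrableOn (fun p => k p.1 p.2) (B ×ˢ A) (μ.prod μ) :=
    integrableOn_prod_of_integrable_mul_indicator hA (hdef _ (hmemLp hA hAμ)) B
  have hsymm : (fun p : X × X => k p.1 p.2) =ᵐ[μ.prod μ] fun p => k p.2 p.1 := by
    refine ae_eq_of_forall_setIntegral_prod_eq_of_sigmaFinite
      (fun B _ _ A hA hAμ => hint hA hAμ) (fun B hB hBμ A _ _ => (hint hB hBμ).swap)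
      fun B hB hBμ A hA hAμ => ?_
    have h := hsa _ _ (hmemLp hA hAμ) (hmemLp hB hBμ)
    simp_rw [mul_comm (A.indicator 1 _)] at h
    rw [integral_integral_mul_indicator hA hB (hint hA hAμ),
      integral_integral_mul_indicator hB hA (hint hB hBμ)] at h
    exact h.trans (setIntegral_prod_swap A B _).symm
  refine hmix.congr ?_
  filter_upwards [hsymm] with p hp
  rw [← hp, sq]

/-- If the integral operator `P f x = ∫ k(x,y) f(y) dμ(y)` on `L²(μ)` is self-adjoint and
`∫∫ k(x,y) k(y,x) dμ dμ < ∞`, then `∫∫ k(x,y)² dμ dμ < ∞`, i.e. `P` is Hilbert–Schmidt. -/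
theorem stmt2 {X : Type*} [MeasurableSpace X] (μ : Measure X) [SigmaFinite μ]
    (k : X → X → ℝ) (hk : Measurable (Function.uncurry k))
    (hmix : Integrable (fun p : X × X => k p.1 p.2 * k p.2 p.1) (μ.prod μ))
    (hdef : ∀ f : X → ℝ, MemLp f 2 μ → Integrable (fun p : X × X => k p.1 p.2 * f p.2) (μ.prod μ))
    (hsa : ∀ f g : X → ℝ, MemLp f 2 μ → MemLp g 2 μ →
      ∫ x, (∫ y, k x y * f y ∂μ) * g x ∂μ = ∫ x, f x * ∫ y, k x y * g y ∂μ ∂μ) :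
    Integrable (fun p : X × X => (k p.1 p.2) ^ 2) (μ.prod μ) :=
  stmt2_general μ k hmix hdef hsa
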